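/- arXiv:1309.7801 — 3 statements merged into one kernel-verified Lean document; each statement's English description precedes it below -/
import Mathlib

section
/- Let Φ be a Bernstein function with Φ ≢ 0 and let R(r) be the Mellin transform of the remainder variable (the unique log-convex solution of R(1)=1, R(r+1)=Φ(r)R(r)). Then for every r > 0, R(r) = lim_{n→∞} [∏_{j=0}^{n-1} Φ(j+1)/Φ(j+r)] · Φ(n)^{r-1}. -/
open MeasureTheory Real Set Filter

/-- A Bernstein function, null at 0: `Φ s = a s + ∫ (1 - exp (-s x)) λ(dx)`
with `a ≥ 0` and `λ` a measure on `(0,∞)` with `∫ (x ∧ 1) λ(dx) < ∞`. -/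
def IsBernstein (Φ : ℝ → ℝ) : Prop :=
  ∃ (a : ℝ) (lam : Measure ℝ), 0 ≤ a ∧ lam (Iic 0) = 0 ∧
    (∫⁻ x, ENNReal.ofReal (min x 1) ∂lam) < ⊤ ∧
    ∀ s ≥ (0 : ℝ), Φ s = a * s + ∫ x, (1 - Real.exp (-s * x)) ∂lam

/-- A subordinator (increasing Lévy process started at 0) with
Laplace–Bernstein exponent `Φ`: stationary independent increments and
`E[exp (-s ξ_l)] = exp (-l Φ(s))`. -/
structure IsSubordinator {Ω : Type*} [MeasurableSpace Ω] (P : Measure Ω)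
    (ξ : ℝ → Ω → ℝ) (Φ : ℝ → ℝ) : Prop where
  isProb : IsProbabilityMeasure P
  meas : ∀ l, Measurable (ξ l)
  zero : ∀ᵐ ω ∂P, ξ 0 ω = 0
  mono : ∀ᵐ ω ∂P, MonotoneOn (fun l => ξ l ω) (Ici 0)
  indep : ∀ (n : ℕ) (t : Fin (n + 1) → ℝ), (∀ i, 0 ≤ t i) → Monotone t →
    ProbabilityTheory.iIndepFun
      (fun i : Fin n => fun ω => ξ (t i.succ) ω - ξ (t i.castSucc) ω) P
  laplace : ∀ t ≥ (0 : ℝ), ∀ l ≥ (0 : ℝ), ∀ s ≥ (0 : ℝ),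
    ∫ ω, Real.exp (-s * (ξ (t + l) ω - ξ t ω)) ∂P = Real.exp (-l * Φ s)

/-- The perpetuity `I = ∫₀^∞ exp (-ξ_l) dl` of a subordinator. -/
noncomputable def perpetuity {Ω : Type*} (ξ : ℝ → Ω → ℝ) (ω : Ω) : ℝ :=
  ∫ l in Ioi (0 : ℝ), Real.exp (-ξ l ω)

/-- The Mellin transform `r ↦ E[X^(r-1)]` of a positive random variable. -/
noncomputable def mellinT {Ω : Type*} [MeasurableSpace Ω] (P : Measure Ω)
    (X : Ω → ℝ) (r : ℝ) : ℝ := ∫ ω, X ω ^ (r - 1) ∂P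

/-! With `g = log ∘ R` convex and `log Φ(x) = g(x+1) - g(x)`, the logarithm of the `n`-th term
is `g(r) - E n` with `E n = g(n+r) - g(n+1) - (r-1) (g(n+1) - g(n))`. Comparing secant slopes of
`g` on `[n, n+1]`, between `n+1` and `n+r`, and on `[n+r, n+r+1]` gives
`|E n| ≤ |r-1| (log Φ(n+r) - log Φ(n))`, and since `Φ(s)/s` is nonincreasing for a Bernstein
function this is at most `|r-1| r / n`. -/

theorem one_sub_exp_neg_mul_le {s x : ℝ} (hs : 0 ≤ s) (hx : 0 ≤ x) :
    1 - exp (-s * x) ≤ (s + 1) * min x 1 := by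
  rcases le_total x 1 with hx1 | hx1
  · rw [min_eq_left hx1]
    nlinarith [add_one_le_exp (-s * x)]
  · rw [min_eq_right hx1]
    nlinarith [exp_pos (-s * x)]

theorem integrable_one_sub_exp_neg_mul {lam : Measure ℝ} (hlam : lam (Iic 0) = 0)
    (hfin : (∫⁻ x, ENNReal.ofReal (min x 1) ∂lam) < ⊤) {s : ℝ} (hs : 0 ≤ s) :
    Integrable (fun x ↦ 1 - exp (-s * x)) lam := by
  have hpos : ∀ᵐ x ∂lam, 0 < x := by
    rw [ae_iff]
    simpa only [not_lt, ← Iic_def] using hlam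
  have hmin : Integrable (fun x ↦ min x 1) lam :=
    ⟨by fun_prop, (hasFiniteIntegral_iff_ofReal
      (hpos.mono fun x hx ↦ le_min hx.le zero_le_one)).2 hfin⟩
  refine (hmin.const_mul (s + 1)).mono' (by fun_prop) (hpos.mono fun x hx ↦ ?_)
  rw [norm_of_nonneg (sub_nonneg.2 (exp_le_one_iff.2 (by nlinarith)))]
  exact one_sub_exp_neg_mul_le hs hx.le

theorem mul_one_sub_exp_neg_mul_le {u v : ℝ} (hu : 0 ≤ u) (huv : u ≤ v) (x : ℝ) :
    u * (1 - exp (-v * x)) ≤ v * (1 - exp (-u * x)) := by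
  rcases huv.eq_or_lt with rfl | huv
  · rfl
  have hv : 0 < v := hu.trans_lt huv
  have hconv := convexOn_exp.2 (mem_univ (-v * x)) (mem_univ 0) (div_nonneg hu hv.le)
    (sub_nonneg.2 ((div_le_one hv).2 huv.le)) (add_sub_cancel _ _)
  simp only [smul_eq_mul, mul_zero, add_zero, exp_zero, mul_one] at hconv
  rw [show u / v * (-v * x) = -u * x by field_simp] at hconv
  have := mul_le_mul_of_nonneg_left hconv hv.le
  rw [mul_add, ← mul_assoc, mul_div_cancel₀ _ hv.ne', mul_sub, mul_div_cancel₀ _ hv.ne'] at this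
  linarith

theorem IsBernstein.mul_le_mul_of_le {Φ : ℝ → ℝ} (hΦ : IsBernstein Φ) {u v : ℝ} (hu : 0 ≤ u)
    (huv : u ≤ v) : u * Φ v ≤ v * Φ u := by
  obtain ⟨a, lam, -, hlam, hfin, hrep⟩ := hΦ
  have hv : 0 ≤ v := hu.trans huv
  have hint : ∫ x, u * (1 - exp (-v * x)) ∂lam ≤ ∫ x, v * (1 - exp (-u * x)) ∂lam :=
    integral_mono ((integrable_one_sub_exp_neg_mul hlam hfin hv).const_mul u)
      ((integrable_one_sub_exp_neg_mul hlam hfin hu).const_mul v)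
      (mul_one_sub_exp_neg_mul_le hu huv)
  rw [integral_const_mul, integral_const_mul] at hint
  rw [hrep u hu, hrep v hv]
  linear_combination hint

section ConvexSlope

variable {𝕜 : Type*} [Field 𝕜] [LinearOrder 𝕜] [IsStrictOrderedRing 𝕜] {s : Set 𝕜} {f : 𝕜 → 𝕜}

theorem ConvexOn.slope_le_slope_of_le (hf : ConvexOn 𝕜 s f) {a b c d : 𝕜} (ha : a ∈ s)
    (hd : d ∈ s) (hab : a < b) (hcd : c < d) (hac : a ≤ c) (hbd : b ≤ d) :
    slope f a b ≤ slope f c d := by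
  have hb : b ∈ s := hf.1.ordConnected.out ha hd ⟨hab.le, hbd⟩
  have hc : c ∈ s := hf.1.ordConnected.out ha hd ⟨hac, hcd.le⟩
  calc slope f a b ≤ slope f a d :=
        hf.slope_mono ha ⟨hb, hab.ne'⟩ ⟨hd, (hab.trans_le hbd).ne'⟩ hbd
    _ = slope f d a := slope_comm f a d
    _ ≤ slope f d c := hf.slope_mono hd ⟨ha, (hab.trans_le hbd).ne⟩ ⟨hc, hcd.ne⟩ hac
    _ = slope f c d := slope_comm f d c

theorem ConvexOn.slope_add_one_mem_Icc (hf : ConvexOn 𝕜 s f) {x r : 𝕜} (hx : x ∈ s)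
    (hxr : x + r + 1 ∈ s) (hr : 0 < r) (hr1 : r ≠ 1) :
    slope f (x + 1) (x + r) ∈ Icc (slope f x (x + 1)) (slope f (x + r) (x + r + 1)) := by
  have mem : ∀ y ∈ Icc x (x + r + 1), y ∈ s := fun y ↦ (hf.1.ordConnected.out hx hxr ·)
  rcases hr1.lt_or_gt with hr1 | hr1
  · rw [slope_comm f (x + 1)]
    exact ⟨hf.slope_le_slope_of_le hx (mem _ ⟨by linarith, by linarith⟩) (by linarith)
        (by linarith) (by linarith) le_rfl,
      hf.slope_le_slope_of_le (mem _ ⟨by linarith, by linarith⟩) hxr (by linarith)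
        (by linarith) le_rfl (by linarith)⟩
  · exact ⟨hf.slope_le_slope_of_le hx (mem _ ⟨by linarith, by linarith⟩) (by linarith)
        (by linarith) (by linarith) (by linarith),
      hf.slope_le_slope_of_le (mem _ ⟨by linarith, by linarith⟩) hxr (by linarith)
        (by linarith) (by linarith) (by linarith)⟩

theorem ConvexOn.abs_sub_sub_mul_slope_le (hf : ConvexOn 𝕜 s f) {x r : 𝕜} (hx : x ∈ s)
    (hxr : x + r + 1 ∈ s) (hr : 0 < r) :
    |f (x + r) - f (x + 1) - (r - 1) * slope f x (x + 1)|
      ≤ |r - 1| * (slope f (x + r) (x + r + 1) - slope f x (x + 1)) := by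
  rcases eq_or_ne r 1 with rfl | hr1
  · simp
  obtain ⟨hlo, hhi⟩ := hf.slope_add_one_mem_Icc hx hxr hr hr1
  have hdiff : f (x + r) - f (x + 1) = (r - 1) * slope f (x + 1) (x + r) := by
    rw [← vsub_eq_sub, ← sub_smul_slope, smul_eq_mul, add_sub_add_left_eq_sub]
  rw [hdiff, ← mul_sub, abs_mul, abs_of_nonneg (sub_nonneg.2 hlo)]
  gcongr

end ConvexSlope

section Recurrence

variable {Φ R : ℝ → ℝ}

theorem pos_of_recurrence (hRpos : ∀ r > (0 : ℝ), 0 < R r)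
    (hReq : ∀ r > (0 : ℝ), R (r + 1) = Φ r * R r) {x : ℝ} (hx : 0 < x) : 0 < Φ x := by
  have h := hRpos (x + 1) (by linarith)
  rw [hReq x hx] at h
  exact pos_of_mul_pos_left h (hRpos x hx).le

theorem slope_log_add_one_eq_log (hRpos : ∀ r > (0 : ℝ), 0 < R r)
    (hReq : ∀ r > (0 : ℝ), R (r + 1) = Φ r * R r) {x : ℝ} (hx : 0 < x) :
    slope (fun r ↦ log (R r)) x (x + 1) = log (Φ x) := by
  rw [slope_def_field, add_sub_cancel_left, div_one, hReq x hx,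
    log_mul (pos_of_recurrence hRpos hReq hx).ne' (hRpos x hx).ne', add_sub_cancel_right]

theorem prod_range_eq_div (hRpos : ∀ r > (0 : ℝ), 0 < R r)
    (hReq : ∀ r > (0 : ℝ), R (r + 1) = Φ r * R r) {s : ℝ} (hs : 0 < s) (n : ℕ) :
    ∏ j ∈ Finset.range n, Φ ((j : ℝ) + s) = R (n + s) / R s := by
  induction n with
  | zero => simp [(hRpos s hs).ne']
  | succ n ih =>
    have hns : (0 : ℝ) < n + s := by positivity
    rw [Finset.prod_range_succ, ih, Nat.cast_succ, add_right_comm, hReq _ hns]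
    field_simp

theorem prod_div_mul_rpow_eq (hRpos : ∀ r > (0 : ℝ), 0 < R r)
    (hReq : ∀ r > (0 : ℝ), R (r + 1) = Φ r * R r) (hR1 : R 1 = 1) {r : ℝ} (hr : 0 < r)
    {n : ℕ} (hn : 0 < n) :
    (∏ j ∈ Finset.range n, Φ ((j : ℝ) + 1) / Φ ((j : ℝ) + r)) * Φ n ^ (r - 1)
      = R r * exp (-(log (R (n + r)) - log (R (n + 1)) - (r - 1) * log (Φ n))) := by
  have hn' : (0 : ℝ) < n := Nat.cast_pos.2 hn
  rw [Finset.prod_div_distrib, prod_range_eq_div hRpos hReq one_pos,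
    prod_range_eq_div hRpos hReq hr, hR1, div_one,
    rpow_def_of_pos (pos_of_recurrence hRpos hReq hn'),
    neg_sub, exp_sub, exp_sub, exp_log (hRpos _ (by positivity)),
    exp_log (hRpos _ (by positivity)), mul_comm (log _)]
  have := hRpos r hr
  field_simp

end Recurrence

theorem IsBernstein.log_sub_log_le {Φ : ℝ → ℝ} (hΦ : IsBernstein Φ) {x r : ℝ} (hx : 0 < x)
    (hr : 0 ≤ r) (hΦx : 0 < Φ x) (hΦxr : 0 < Φ (x + r)) :
    log (Φ (x + r)) - log (Φ x) ≤ r / x := by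
  rw [← log_div hΦxr.ne' hΦx.ne']
  calc log (Φ (x + r) / Φ x) ≤ Φ (x + r) / Φ x - 1 := log_le_sub_one_of_pos (by positivity)
    _ ≤ r / x := by
      rw [div_sub_one hΦx.ne', div_le_div_iff₀ hΦx hx]
      linarith [hΦ.mul_le_mul_of_le hx.le (le_add_of_nonneg_right hr)]

theorem remainder_mellin_limit_general
    (Φ : ℝ → ℝ) (hΦ : IsBernstein Φ)
    (R : ℝ → ℝ) (hRpos : ∀ r > (0 : ℝ), 0 < R r) (hR1 : R 1 = 1)
    (hReq : ∀ r > (0 : ℝ), R (r + 1) = Φ r * R r)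
    (hRconv : ConvexOn ℝ (Ioi 0) (fun r => Real.log (R r))) :
    ∀ r > (0 : ℝ),
      Tendsto (fun n : ℕ =>
          (∏ j ∈ Finset.range n, Φ ((j : ℝ) + 1) / Φ ((j : ℝ) + r)) * Φ n ^ (r - 1))
        atTop (nhds (R r)) := by
  intro r hr
  have hΦpos {x : ℝ} (hx : 0 < x) : 0 < Φ x := pos_of_recurrence hRpos hReq hx
  set E : ℕ → ℝ := fun n ↦ log (R (n + r)) - log (R (n + 1)) - (r - 1) * log (Φ n)
  have hE {n : ℕ} (hn : 0 < n) : ‖E n‖ ≤ |r - 1| * (r / n) := by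
    have hn' : (0 : ℝ) < n := Nat.cast_pos.2 hn
    have h := hRconv.abs_sub_sub_mul_slope_le (x := n) hn' (by simp only [mem_Ioi]; positivity) hr
    rw [slope_log_add_one_eq_log hRpos hReq hn',
      slope_log_add_one_eq_log hRpos hReq (by positivity)] at h
    refine h.trans ?_
    gcongr
    exact hΦ.log_sub_log_le hn' hr.le (hΦpos hn') (hΦpos (by positivity))
  have hE0 : Tendsto E atTop (nhds 0) :=
    squeeze_zero_norm' ((eventually_gt_atTop 0).mono fun n hn ↦ hE hn)
      (by simpa using (tendsto_const_div_atTop_nhds_zero_nat r).const_mul |r - 1|)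
  have hlim : Tendsto (fun n ↦ R r * exp (-E n)) atTop (nhds (R r)) := by
    simpa using tendsto_const_nhds.mul hE0.neg.rexp
  refine hlim.congr' ((eventually_gt_atTop 0).mono fun n hn ↦ ?_)
  exact (prod_div_mul_rpow_eq hRpos hReq hR1 hr hn).symm

/-- Asymptotic formula for the Mellin transform of the remainder:
`R(r) = lim_n [∏_{j=0}^{n-1} Φ(j+1)/Φ(j+r)] Φ(n)^{r-1}`. -/
theorem remainder_mellin_limit
    (Φ : ℝ → ℝ) (hΦ : IsBernstein Φ) (hΦne : ∃ s > (0 : ℝ), Φ s ≠ 0)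
    (R : ℝ → ℝ) (hRpos : ∀ r > (0 : ℝ), 0 < R r) (hR1 : R 1 = 1)
    (hReq : ∀ r > (0 : ℝ), R (r + 1) = Φ r * R r)
    (hRconv : ConvexOn ℝ (Ioi 0) (fun r => Real.log (R r))) :
    ∀ r > (0 : ℝ),
      Tendsto (fun n : ℕ =>
          (∏ j ∈ Finset.range n, Φ ((j : ℝ) + 1) / Φ ((j : ℝ) + r)) * Φ n ^ (r - 1))
        atTop (nhds (R r)) :=
  remainder_mellin_limit_general Φ hΦ R hRpos hR1 hReq hRconv
end

section
/- Let Φ ≢ 0 be a Bernstein function, κ the measure on (0,∞) with Laplace transform Φ'(s)/Φ(s), and R(r) the Mellin transform of the remainder variable. Then for every r > 0: R(r) = Φ(1)^{r-1} · exp[ ∫_{(0,∞)} (e^{-(r-1)x} - 1 - (r-1)(e^{-x} - 1)) / (x(e^x - 1)) κ(dx) ]. -/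
open MeasureTheory Real Set Filter

/-!
Both `R` and the right-hand side are positive, log-convex on `(0, ∞)`, equal to `1` at `r = 1`,
and satisfy `f (r + 1) = Φ r * f r`. As in the Bohr–Mollerup theorem, convexity squeezes
`log f r` between difference quotients of `log Φ` at large integers, and these differences tend
to `0` because `Φ` is nondecreasing and `Φ s / s` is nonincreasing; so such an `f` is unique.
For the right-hand side, log-convexity is the convexity in `r` of the integrand, and the
functional equation comes from
`remainderKernel (r + 1) x - remainderKernel r x = ∫₁ʳ e^{-sx} ds`, Fubini, and
`∫ e^{-sx} κ(dx) = Φ' s / Φ s = (log Φ)' s`.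
-/

open Topology

section PositiveHalfLine

variable {μ : Measure ℝ}

lemma ae_pos_of_measure_Iic_eq_zero (hμ : μ (Iic 0) = 0) : ∀ᵐ x ∂μ, 0 < x := by
  rw [ae_iff]
  simp only [not_lt]
  exact hμ

lemma add_integral_pos (hμ : μ (Iic 0) = 0) {b : ℝ} (hb : 0 ≤ b) (hne : b ≠ 0 ∨ μ ≠ 0)
    {f : ℝ → ℝ} (hf : Integrable f μ) (hfpos : ∀ x, 0 < x → 0 < f x) :
    0 < b + ∫ x, f x ∂μ := by
  have hnonneg : 0 ≤ᵐ[μ] f := (ae_pos_of_measure_Iic_eq_zero hμ).mono fun x hx => (hfpos x hx).le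
  rcases hne with hb0 | hμ0
  · exact add_pos_of_pos_of_nonneg (hb.lt_of_ne' hb0) (integral_nonneg_of_ae hnonneg)
  refine add_pos_of_nonneg_of_pos hb ((integral_pos_iff_support_of_nonneg_ae hnonneg hf).2 ?_)
  have hIoi : μ (Ioi 0) ≠ 0 := fun h => hμ0 <| Measure.measure_univ_eq_zero.1 <| by
    rw [← Iic_union_Ioi (a := (0 : ℝ))]
    exact measure_union_null hμ h
  exact (pos_iff_ne_zero.2 hIoi).trans_le (measure_mono fun x hx => (hfpos x hx).ne')

end PositiveHalfLine

lemma sigmaFinite_of_integrable_pos {α : Type*} [MeasurableSpace α] {μ : Measure α}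
    {f : α → ℝ} (hf : Integrable f μ) (hpos : ∀ x, 0 < f x) : SigmaFinite μ := by
  refine Measure.sigmaFinite_of_countable
    (S := range fun n : ℕ => {x | 1 / ((n : ℝ) + 1) ≤ f x}) (countable_range _) ?_ ?_
  · rintro _ ⟨n, rfl⟩
    exact hf.measure_ge_lt_top Nat.one_div_pos_of_nat
  · refine eq_univ_of_forall fun x => mem_sUnion.2 ?_
    obtain ⟨n, hn⟩ := exists_nat_one_div_lt (hpos x)
    exact ⟨_, ⟨n, rfl⟩, hn.le⟩

/-- The Lévy-measure condition of `IsBernstein`. -/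
def IsLevyMeasure (lam : Measure ℝ) : Prop :=
  lam (Iic 0) = 0 ∧ (∫⁻ x, ENNReal.ofReal (min x 1) ∂lam) < ⊤

namespace IsLevyMeasure

variable {lam : Measure ℝ}

lemma integrable_of_abs_le (hlam : IsLevyMeasure lam) {f : ℝ → ℝ} (hf : Measurable f) {C : ℝ}
    (hC : ∀ x, 0 < x → |f x| ≤ C * min x 1) : Integrable f lam := by
  have hmin : Integrable (fun x => (ENNReal.ofReal (min x 1)).toReal) lam :=
    integrable_toReal_of_lintegral_ne_top (by fun_prop) hlam.2.ne
  refine (hmin.const_mul C).mono' hf.aestronglyMeasurable ?_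
  filter_upwards [ae_pos_of_measure_Iic_eq_zero hlam.1] with x hx
  rw [ENNReal.toReal_ofReal (le_min hx.le zero_le_one)]
  exact hC x hx

lemma integrable_one_sub_exp (hlam : IsLevyMeasure lam) {s : ℝ} (hs : 0 ≤ s) :
    Integrable (fun x => 1 - exp (-s * x)) lam := by
  refine hlam.integrable_of_abs_le (by fun_prop) (C := s + 1) fun x hx => ?_
  have h1 : exp (-s * x) ≤ 1 := exp_le_one_iff.2 (by nlinarith)
  have h2 : -s * x + 1 ≤ exp (-s * x) := add_one_le_exp _
  rw [abs_of_nonneg (by linarith)]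
  rcases le_total x 1 with h | h
  · rw [min_eq_left h]; nlinarith
  · rw [min_eq_right h]; nlinarith [exp_pos (-s * x)]

lemma integrable_mul_exp (hlam : IsLevyMeasure lam) {s : ℝ} (hs : 0 < s) :
    Integrable (fun x => x * exp (-s * x)) lam := by
  refine hlam.integrable_of_abs_le (by fun_prop) (C := 1 + 1 / s) fun x hx => ?_
  have h1 : exp (-s * x) ≤ 1 := exp_le_one_iff.2 (by nlinarith)
  have h2 : x * exp (-s * x) ≤ 1 / s := by
    have := add_one_le_exp (s * x)
    rw [le_div_iff₀ hs, show -s * x = -(s * x) by ring, exp_neg]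
    calc x * (exp (s * x))⁻¹ * s = s * x / exp (s * x) := by ring
      _ ≤ 1 := (div_le_one (exp_pos _)).2 (by linarith)
  rw [abs_of_nonneg (by positivity)]
  have h3 : 0 ≤ 1 / s := by positivity
  rcases le_total x 1 with h | h
  · rw [min_eq_left h]; nlinarith
  · rw [min_eq_right h]; linarith

lemma hasDerivAt_integral_one_sub_exp (hlam : IsLevyMeasure lam) {s : ℝ} (hs : 0 < s) :
    HasDerivAt (fun t => ∫ x, (1 - exp (-t * x)) ∂lam) (∫ x, x * exp (-s * x) ∂lam) s := by
  refine (hasDerivAt_integral_of_dominated_loc_of_deriv_le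
    (F' := fun t x => x * exp (-t * x)) (Metric.ball_mem_nhds s (half_pos hs))
    (Eventually.of_forall fun t => Measurable.aestronglyMeasurable (by fun_prop))
    (hlam.integrable_one_sub_exp hs.le) (Measurable.aestronglyMeasurable (by fun_prop))
    ?_ (hlam.integrable_mul_exp (half_pos hs)) ?_).2
  · filter_upwards [ae_pos_of_measure_Iic_eq_zero hlam.1] with x hx t ht
    have ht' : s / 2 < t := by
      rw [Metric.mem_ball, Real.dist_eq, abs_lt] at ht
      linarith
    rw [Real.norm_eq_abs, abs_of_nonneg (by positivity)]
    exact mul_le_mul_of_nonneg_left (exp_le_exp.2 (by nlinarith)) hx.le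
  · refine Eventually.of_forall fun x t _ => ?_
    have hlin : HasDerivAt (fun t : ℝ => -t * x) (-1 * x) t := (hasDerivAt_id t).neg.mul_const x
    convert hlin.exp.const_sub 1 using 1
    ring

lemma hasDerivAt_bernstein (hlam : IsLevyMeasure lam) {Φ : ℝ → ℝ} {a : ℝ}
    (hrep : ∀ s ≥ (0 : ℝ), Φ s = a * s + ∫ x, (1 - exp (-s * x)) ∂lam) {s : ℝ} (hs : 0 < s) :
    HasDerivAt Φ (a + ∫ x, x * exp (-s * x) ∂lam) s := by
  have hlin : HasDerivAt (fun t : ℝ => a * t) a s := by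
    simpa using (hasDerivAt_id s).const_mul a
  refine (hlin.add (hlam.hasDerivAt_integral_one_sub_exp hs)).congr_of_eventuallyEq ?_
  filter_upwards [Ioi_mem_nhds hs] with t ht
  exact hrep t (le_of_lt ht)

end IsLevyMeasure

namespace IsBernstein

variable {Φ : ℝ → ℝ}

lemma monotoneOn (hΦ : IsBernstein Φ) : MonotoneOn Φ (Ici 0) := by
  obtain ⟨a, lam, ha, h0, hfin, hrep⟩ := hΦ
  have hlam : IsLevyMeasure lam := ⟨h0, hfin⟩
  intro s (hs : 0 ≤ s) t (ht : 0 ≤ t) hst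
  rw [hrep s hs, hrep t ht]
  have hint := integral_mono_ae (hlam.integrable_one_sub_exp hs) (hlam.integrable_one_sub_exp ht)
    ((ae_pos_of_measure_Iic_eq_zero h0).mono fun x hx => by
      have : exp (-t * x) ≤ exp (-s * x) := exp_le_exp.2 (by nlinarith)
      simp only
      linarith)
  nlinarith [mul_le_mul_of_nonneg_left hst ha]

lemma mul_apply_le_mul_apply (hΦ : IsBernstein Φ) {s t : ℝ} (hs : 0 < s) (hst : s ≤ t) :
    s * Φ t ≤ t * Φ s := by
  obtain ⟨a, lam, ha, h0, hfin, hrep⟩ := hΦ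
  have hlam : IsLevyMeasure lam := ⟨h0, hfin⟩
  have ht : 0 < t := hs.trans_le hst
  have hpt : ∀ x, s * (1 - exp (-t * x)) ≤ t * (1 - exp (-s * x)) := by
    intro x
    have hc := convexOn_exp.2 (mem_univ (-t * x)) (mem_univ 0) (div_nonneg hs.le ht.le)
      (sub_nonneg.2 ((div_le_one ht).2 hst)) (add_sub_cancel _ _)
    simp only [smul_eq_mul, mul_zero, add_zero, exp_zero, mul_one] at hc
    rw [show s / t * (-t * x) = -s * x by field_simp] at hc
    have h := mul_le_mul_of_nonneg_left hc ht.le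
    rw [mul_add, ← mul_assoc, mul_div_cancel₀ _ ht.ne', mul_sub, mul_div_cancel₀ _ ht.ne'] at h
    linarith
  have hint := integral_mono ((hlam.integrable_one_sub_exp ht.le).const_mul s)
    ((hlam.integrable_one_sub_exp hs.le).const_mul t) hpt
  rw [integral_const_mul, integral_const_mul] at hint
  rw [hrep s hs.le, hrep t ht.le]
  nlinarith

lemma coeff_ne_zero_or_measure_ne_zero {a : ℝ} {lam : Measure ℝ}
    (hrep : ∀ s ≥ (0 : ℝ), Φ s = a * s + ∫ x, (1 - exp (-s * x)) ∂lam)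
    (hne : ∃ s > (0 : ℝ), Φ s ≠ 0) : a ≠ 0 ∨ lam ≠ 0 := by
  by_contra! h
  obtain ⟨s, hs, hΦs⟩ := hne
  exact hΦs (by simp [hrep s hs.le, h.1, h.2])

lemma pos (hΦ : IsBernstein Φ) (hne : ∃ s > (0 : ℝ), Φ s ≠ 0) {s : ℝ} (hs : 0 < s) :
    0 < Φ s := by
  obtain ⟨a, lam, ha, h0, hfin, hrep⟩ := hΦ
  rw [hrep s hs.le]
  refine add_integral_pos h0 (by positivity)
    ((coeff_ne_zero_or_measure_ne_zero hrep hne).imp_left (mul_ne_zero · hs.ne'))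
    (IsLevyMeasure.integrable_one_sub_exp ⟨h0, hfin⟩ hs.le) fun x hx => ?_
  simpa using exp_lt_one_iff.2 (by nlinarith : -s * x < 0)

lemma differentiableAt (hΦ : IsBernstein Φ) {s : ℝ} (hs : 0 < s) : DifferentiableAt ℝ Φ s := by
  obtain ⟨a, lam, -, h0, hfin, hrep⟩ := hΦ
  exact (IsLevyMeasure.hasDerivAt_bernstein ⟨h0, hfin⟩ hrep hs).differentiableAt

lemma deriv_pos (hΦ : IsBernstein Φ) (hne : ∃ s > (0 : ℝ), Φ s ≠ 0) {s : ℝ} (hs : 0 < s) :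
    0 < deriv Φ s := by
  obtain ⟨a, lam, ha, h0, hfin, hrep⟩ := hΦ
  have hlam : IsLevyMeasure lam := ⟨h0, hfin⟩
  rw [(hlam.hasDerivAt_bernstein hrep hs).deriv]
  exact add_integral_pos h0 ha (coeff_ne_zero_or_measure_ne_zero hrep hne)
    (hlam.integrable_mul_exp hs) fun x hx => by positivity

lemma tendsto_log_succ_sub_log (hΦ : IsBernstein Φ) (hne : ∃ s > (0 : ℝ), Φ s ≠ 0) :
    Tendsto (fun n : ℕ => log (Φ (n + 1)) - log (Φ n)) atTop (𝓝 0) := by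
  refine tendsto_of_tendsto_of_tendsto_of_le_of_le' tendsto_const_nhds
    tendsto_log_nat_add_one_sub_log ?_ ?_
  all_goals filter_upwards [eventually_gt_atTop 0] with n hn
  all_goals have hn' : (0 : ℝ) < n := Nat.cast_pos.2 hn
  all_goals have h1 := hΦ.pos hne hn'
  all_goals have h2 := hΦ.pos hne (hn'.trans (lt_add_one (n : ℝ)))
  · exact sub_nonneg.2 (log_le_log h1 (hΦ.monotoneOn (mem_Ici.2 hn'.le)
      (mem_Ici.2 (by positivity)) (by linarith)))
  · rw [sub_le_sub_iff, ← log_mul h2.ne' hn'.ne', ← log_mul (by positivity) h1.ne']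
    exact log_le_log (by positivity)
      (by linarith [hΦ.mul_apply_le_mul_apply hn' (le_add_of_nonneg_right zero_le_one)])

end IsBernstein

section LogConvexUniqueness

variable {g g₁ g₂ L : ℝ → ℝ}

lemma ConvexOn.add_one_sub_bounds (hg : ConvexOn ℝ (Ioi 0) g)
    (hrec : ∀ x > 0, g (x + 1) = g x + L x) {x r : ℝ} (hx : 0 < x) (hr : r ∈ Ioc (0 : ℝ) 1) :
    r * L x ≤ g (x + 1 + r) - g (x + 1) ∧ g (x + 1 + r) - g (x + 1) ≤ r * L (x + 1) := by
  obtain ⟨hr0, hr1⟩ := hr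
  have hlow := hg.slope_mono_adjacent (y := x + 1) (z := x + 1 + r) (mem_Ioi.2 hx)
    (mem_Ioi.2 (by positivity)) (by linarith) (by linarith)
  have hup := hg.secant_mono (a := x + 1) (x := x + 1 + r) (y := x + 1 + 1)
    (mem_Ioi.2 (by positivity)) (mem_Ioi.2 (by positivity)) (mem_Ioi.2 (by positivity))
    (by linarith) (by linarith) (by linarith)
  rw [hrec x hx] at hlow
  rw [hrec (x + 1) (by positivity)] at hup
  simp only [add_sub_cancel_left, div_one] at hlow hup
  rw [le_div_iff₀ hr0] at hlow
  rw [div_le_iff₀ hr0] at hup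
  exact ⟨by rw [hrec x hx]; linarith, by linarith⟩

lemma exists_nat_sub_mem_Ioc {r : ℝ} (hr : 0 < r) : ∃ n : ℕ, r - n ∈ Ioc (0 : ℝ) 1 := by
  refine ⟨⌈r⌉₊ - 1, ?_⟩
  rw [Nat.cast_sub (Nat.one_le_ceil_iff.2 hr), Nat.cast_one]
  exact ⟨by linarith [Nat.ceil_lt_add_one hr.le], by linarith [Nat.le_ceil r]⟩

/-- Bohr–Mollerup-type uniqueness. -/
theorem eqOn_Ioi_of_convexOn_of_add_one (hc₁ : ConvexOn ℝ (Ioi 0) g₁)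
    (hc₂ : ConvexOn ℝ (Ioi 0) g₂) (hrec₁ : ∀ x > 0, g₁ (x + 1) = g₁ x + L x)
    (hrec₂ : ∀ x > 0, g₂ (x + 1) = g₂ x + L x) (h1 : g₁ 1 = g₂ 1)
    (hL : Tendsto (fun n : ℕ => L (n + 1) - L n) atTop (𝓝 0)) : EqOn g₁ g₂ (Ioi 0) := by
  have hper : ∀ x > 0, ∀ n : ℕ, g₁ (x + n) - g₂ (x + n) = g₁ x - g₂ x := by
    intro x hx n
    induction n with
    | zero => simp
    | succ n ih =>
      rw [Nat.cast_succ, ← add_assoc, hrec₁ _ (by positivity), hrec₂ _ (by positivity)]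
      linarith
  have hsmall : ∀ r ∈ Ioc (0 : ℝ) 1, g₁ r = g₂ r := by
    intro r hr
    -- `g₁ - g₂` is 1-periodic and each `gᵢ (n + 1 + r) - gᵢ (n + 1)` is in `[r L n, r L (n + 1)]`
    have hbound : ∀ n : ℕ, 0 < n → |g₁ r - g₂ r| ≤ r * (L (n + 1) - L n) := by
      intro n hn
      have hn' : (0 : ℝ) < n := Nat.cast_pos.2 hn
      have e₁ := hper r hr.1 (n + 1)
      have e₂ := hper 1 one_pos n
      rw [h1, sub_self, add_comm (1 : ℝ)] at e₂
      rw [Nat.cast_succ, add_comm r] at e₁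
      obtain ⟨l₁, u₁⟩ := hc₁.add_one_sub_bounds hrec₁ hn' hr
      obtain ⟨l₂, u₂⟩ := hc₂.add_one_sub_bounds hrec₂ hn' hr
      rw [abs_le]
      constructor <;> linarith
    have hlim : Tendsto (fun n : ℕ => r * (L (n + 1) - L n)) atTop (𝓝 0) := by
      simpa using hL.const_mul r
    exact sub_eq_zero.1 <| abs_nonpos_iff.1 <|
      ge_of_tendsto hlim ((eventually_gt_atTop 0).mono hbound)
  intro r (hr : 0 < r)
  obtain ⟨n, hn⟩ := exists_nat_sub_mem_Ioc hr
  have := hper (r - n) hn.1 n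
  rw [sub_add_cancel, hsmall _ hn, sub_self] at this
  linarith

end LogConvexUniqueness

lemma abs_exp_sub_one_sub_le_sq_mul_exp_abs (y : ℝ) : |exp y - 1 - y| ≤ y ^ 2 * exp |y| := by
  have hφ : 0 ≤ exp y - 1 - y := by linarith [add_one_le_exp y]
  have he : 1 ≤ exp |y| := one_le_exp (abs_nonneg y)
  rcases le_or_gt |y| 1 with hy | hy
  · exact (abs_exp_sub_one_sub_id_le hy).trans (le_mul_of_one_le_right (sq_nonneg y) he)
  · have hy2 : 1 ≤ y ^ 2 := by nlinarith [sq_abs y, abs_nonneg y]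
    rw [abs_of_nonneg hφ]
    rcases le_total 0 y with h | h
    · rw [abs_of_nonneg h] at he ⊢
      nlinarith
    · have : exp y ≤ 1 := exp_le_one_iff.2 h
      nlinarith [add_one_le_exp |y|, neg_abs_le y]

noncomputable def remainderKernel (r x : ℝ) : ℝ :=
  (exp (-(r - 1) * x) - 1 - (r - 1) * (exp (-x) - 1)) / (x * (exp x - 1))

section RemainderKernel

variable {r x : ℝ}

lemma mul_exp_sub_one_pos (hx : 0 < x) : 0 < x * (exp x - 1) :=
  mul_pos hx (sub_pos.2 (one_lt_exp_iff.2 hx))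

@[simp]
lemma remainderKernel_one (x : ℝ) : remainderKernel 1 x = 0 := by
  simp [remainderKernel]

lemma remainderKernel_add_one_sub (hx : 0 < x) :
    remainderKernel (r + 1) x - remainderKernel r x = ∫ s in (1 : ℝ)..r, exp (-s * x) := by
  have hint : ∫ s in (1 : ℝ)..r, exp (-s * x) = (exp (-x) - exp (-r * x)) / x := by
    simp_rw [neg_mul, ← mul_neg]
    rw [intervalIntegral.integral_comp_mul_right exp (neg_ne_zero.2 hx.ne'), integral_exp,
      smul_eq_mul]
    field_simp
    ring_nf
  have hex : exp x - 1 ≠ 0 := (sub_pos.2 (one_lt_exp_iff.2 hx)).ne'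
  rw [hint, remainderKernel, remainderKernel,
    show -(r + 1 - 1) * x = -(r - 1) * x + -x by ring, show -r * x = -(r - 1) * x + -x by ring,
    exp_add, exp_neg x]
  field_simp
  ring

lemma convexOn_remainderKernel (hx : 0 < x) : ConvexOn ℝ univ (remainderKernel · x) := by
  refine ⟨convex_univ, fun p _ q _ u v hu hv huv => ?_⟩
  have hc := convexOn_exp.2 (mem_univ (-(p - 1) * x)) (mem_univ (-(q - 1) * x)) hu hv huv
  obtain rfl : v = 1 - u := eq_sub_of_add_eq' huv
  simp only [smul_eq_mul] at hc ⊢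
  rw [show u * (-(p - 1) * x) + (1 - u) * (-(q - 1) * x) = -(u * p + (1 - u) * q - 1) * x by ring]
    at hc
  rw [← sub_nonneg]
  convert div_nonneg (sub_nonneg.2 hc) (mul_exp_sub_one_pos hx).le using 1
  unfold remainderKernel
  ring

lemma remainderKernel_eq (r x : ℝ) : remainderKernel r x =
    ((exp ((1 - r) * x) - 1 - (1 - r) * x) - (r - 1) * (exp (-x) - 1 - -x)) /
      (x * (exp x - 1)) := by
  rw [remainderKernel, show -(r - 1) * x = (1 - r) * x by ring]
  ring

lemma abs_remainderKernel_le_of_le_one (hx : 0 < x) (hx1 : x ≤ 1) :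
    |remainderKernel r x| ≤ |r - 1| ^ 2 * exp |r - 1| + |r - 1| * exp 1 := by
  have hD : x ^ 2 ≤ x * (exp x - 1) := by nlinarith [add_one_le_exp x]
  have hb := abs_nonneg (r - 1)
  have h₁ : |exp ((1 - r) * x) - 1 - (1 - r) * x| ≤ x ^ 2 * (|r - 1| ^ 2 * exp |r - 1|) := by
    refine (abs_exp_sub_one_sub_le_sq_mul_exp_abs _).trans ?_
    rw [abs_mul, abs_sub_comm, abs_of_pos hx, mul_pow, sq_abs]
    have : exp (|r - 1| * x) ≤ exp |r - 1| := exp_le_exp.2 (mul_le_of_le_one_right hb hx1)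
    nlinarith [sq_nonneg ((r - 1) * x), sq_nonneg x]
  have h₂ : |exp (-x) - 1 - -x| ≤ x ^ 2 * exp 1 := by
    refine (abs_exp_sub_one_sub_le_sq_mul_exp_abs _).trans ?_
    rw [abs_neg, abs_of_pos hx, neg_sq]
    exact mul_le_mul_of_nonneg_left (exp_le_exp.2 hx1) (sq_nonneg x)
  rw [remainderKernel_eq, abs_div, abs_of_pos (mul_exp_sub_one_pos hx),
    div_le_iff₀ (mul_exp_sub_one_pos hx)]
  calc _ ≤ |exp ((1 - r) * x) - 1 - (1 - r) * x| + |r - 1| * |exp (-x) - 1 - -x| := by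
        rw [← abs_mul]; exact abs_sub _ _
    _ ≤ x ^ 2 * (|r - 1| ^ 2 * exp |r - 1|) + |r - 1| * (x ^ 2 * exp 1) := by gcongr
    _ ≤ _ := by
        have hC : 0 ≤ |r - 1| ^ 2 * exp |r - 1| + |r - 1| * exp 1 := by positivity
        linarith [mul_le_mul_of_nonneg_left hD hC]

lemma abs_remainderKernel_le_of_one_le (hx : 1 ≤ x) :
    |remainderKernel r x| ≤ 2 * (2 + |r - 1|) * exp (-min r 1 * x) := by
  set m := min r 1
  have hx0 : 0 < x := one_pos.trans_le hx
  have hE : 1 ≤ exp ((1 - m) * x) := one_le_exp (by nlinarith [min_le_right r 1])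
  have h₁ : exp (-(r - 1) * x) ≤ exp ((1 - m) * x) := exp_le_exp.2 (by nlinarith [min_le_left r 1])
  have h₂ : |exp (-x) - 1| ≤ 1 := by
    rw [abs_sub_comm, abs_of_nonneg (by linarith [exp_le_one_iff.2 (neg_nonpos.2 hx0.le)])]
    linarith [exp_pos (-x)]
  have hN : |exp (-(r - 1) * x) - 1 - (r - 1) * (exp (-x) - 1)| ≤
      (2 + |r - 1|) * exp ((1 - m) * x) := by
    calc _ ≤ |exp (-(r - 1) * x) - 1| + |r - 1| * |exp (-x) - 1| := by
          rw [← abs_mul]; exact abs_sub _ _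
      _ ≤ (exp (-(r - 1) * x) + 1) + |r - 1| * 1 := by
          gcongr
          exact (abs_sub _ _).trans (by rw [abs_of_pos (exp_pos _), abs_one])
      _ ≤ _ := by nlinarith [abs_nonneg (r - 1)]
  -- since `e^x ≥ e ≥ 2`
  have hD : exp x / 2 ≤ x * (exp x - 1) := by
    nlinarith [exp_le_exp.2 hx, add_one_le_exp (1 : ℝ)]
  rw [remainderKernel, abs_div, abs_of_pos (mul_exp_sub_one_pos hx0)]
  calc _ ≤ (2 + |r - 1|) * exp ((1 - m) * x) / (exp x / 2) :=
        div_le_div₀ (by positivity) hN (by positivity) hD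
    _ = _ := by
        rw [show (1 - m) * x = -m * x + x by ring, exp_add]
        field_simp

lemma abs_remainderKernel_le (r : ℝ) :
    ∃ K, ∀ x, 0 < x → |remainderKernel r x| ≤ K * exp (-min r 1 * x) := by
  refine ⟨(|r - 1| ^ 2 * exp |r - 1| + |r - 1| * exp 1) * exp 1 + 2 * (2 + |r - 1|),
    fun x hx => ?_⟩
  have hC : 0 ≤ |r - 1| ^ 2 * exp |r - 1| + |r - 1| * exp 1 := by positivity
  have hE := exp_pos (-min r 1 * x)
  rcases le_total x 1 with hx1 | hx1
  · have h : 1 ≤ exp 1 * exp (-min r 1 * x) := by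
      rw [← exp_add]; exact one_le_exp (by nlinarith [min_le_right r 1])
    have := abs_remainderKernel_le_of_le_one (r := r) hx hx1
    have h2 : 0 ≤ 2 * (2 + |r - 1|) * exp (-min r 1 * x) := by positivity
    nlinarith [mul_le_mul_of_nonneg_left h hC]
  · have := abs_remainderKernel_le_of_one_le (r := r) hx1
    nlinarith [exp_pos 1, mul_nonneg (mul_nonneg hC (exp_pos 1).le) hE.le]

end RemainderKernel

lemma IsBernstein.integral_deriv_div (hΦ : IsBernstein Φ) (hne : ∃ s > (0 : ℝ), Φ s ≠ 0) {r : ℝ}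
    (hr : 0 < r) : ∫ s in (1 : ℝ)..r, deriv Φ s / Φ s = log (Φ r) - log (Φ 1) := by
  have hsub : uIcc 1 r ⊆ Ioi 0 := fun s hs => lt_of_lt_of_le (lt_min one_pos hr) hs.1
  have hderiv : ∀ s ∈ uIcc 1 r, HasDerivAt (fun t => log (Φ t)) (deriv Φ s / Φ s) s :=
    fun s hs => (hΦ.differentiableAt (hsub hs)).hasDerivAt.log (hΦ.pos hne (hsub hs)).ne'
  refine intervalIntegral.integral_eq_sub_of_hasDerivAt hderiv
    (intervalIntegral.intervalIntegrable_deriv_of_nonneg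
      (fun s hs => (hderiv s hs).continuousAt.continuousWithinAt)
      (fun s hs => hderiv s (Ioo_subset_Icc_self hs)) fun s hs => ?_)
  have hs := hsub (Ioo_subset_Icc_self hs)
  exact (div_pos (hΦ.deriv_pos hne hs) (hΦ.pos hne hs)).le

section LaplaceMeasure

variable {κ : Measure ℝ}

lemma integrable_remainderKernel (hκ0 : κ (Iic 0) = 0)
    (hexp : ∀ s > (0 : ℝ), Integrable (fun x => exp (-s * x)) κ) {r : ℝ} (hr : 0 < r) :
    Integrable (remainderKernel r) κ := by
  obtain ⟨K, hK⟩ := abs_remainderKernel_le r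
  have hmeas : Measurable (remainderKernel r) := by unfold remainderKernel; fun_prop
  refine ((hexp _ (lt_min hr one_pos)).const_mul K).mono' hmeas.aestronglyMeasurable ?_
  filter_upwards [ae_pos_of_measure_Iic_eq_zero hκ0] with x hx
  exact hK x hx

lemma integral_intervalIntegral_exp_comm (hκ0 : κ (Iic 0) = 0)
    (hexp : ∀ s > (0 : ℝ), Integrable (fun x => exp (-s * x)) κ) [SigmaFinite κ] {r : ℝ}
    (hr : 0 < r) :
    ∫ x, (∫ s in (1 : ℝ)..r, exp (-s * x)) ∂κ = ∫ s in (1 : ℝ)..r, ∫ x, exp (-s * x) ∂κ := by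
  have hcont : Continuous (Function.uncurry fun s x : ℝ => exp (-s * x)) := by fun_prop
  refine (intervalIntegral_integral_swap ?_).symm
  rw [integrable_prod_iff' hcont.aestronglyMeasurable]
  refine ⟨Eventually.of_forall fun x => (by fun_prop : Continuous _).integrableOn_uIoc, ?_⟩
  refine ((hexp _ (lt_min one_pos hr)).const_mul (volume.real (uIoc 1 r))).mono'
    hcont.norm.stronglyMeasurable.integral_prod_left'.aestronglyMeasurable ?_
  filter_upwards [ae_pos_of_measure_Iic_eq_zero hκ0] with x hx
  refine (norm_setIntegral_le_of_norm_le_const (μ := volume) (by simp [Real.volume_uIoc])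
    fun s hs => ?_).trans_eq (mul_comm _ _)
  simp only [Function.uncurry_apply_pair, norm_of_nonneg (exp_pos _).le]
  exact exp_le_exp.2 (by nlinarith [hs.1.le])

lemma IsBernstein.integrable_exp_of_laplace {Φ : ℝ → ℝ} (hΦ : IsBernstein Φ)
    (hne : ∃ s > (0 : ℝ), Φ s ≠ 0) (hκ : ∀ s > (0 : ℝ), ∫ x, exp (-s * x) ∂κ = deriv Φ s / Φ s)
    {s : ℝ} (hs : 0 < s) : Integrable (fun x => exp (-s * x)) κ := by
  -- a nonintegrable function has integral `0`, but `Φ' / Φ > 0`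
  by_contra h
  exact (div_pos (hΦ.deriv_pos hne hs) (hΦ.pos hne hs)).ne' (hκ s hs ▸ integral_undef h)

lemma convexOn_affine_add_integral_remainderKernel (hκ0 : κ (Iic 0) = 0)
    (hexp : ∀ s > (0 : ℝ), Integrable (fun x => exp (-s * x)) κ) (c : ℝ) :
    ConvexOn ℝ (Ioi 0) fun r => (r - 1) * c + ∫ x, remainderKernel r x ∂κ := by
  have hlin : ConvexOn ℝ (Ioi 0) fun r : ℝ => (r - 1) * c :=
    ⟨convex_Ioi 0, fun p _ q _ u v _ _ huv =>
      le_of_eq (by simp only [smul_eq_mul]; linear_combination c * huv)⟩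
  refine hlin.add <| integral_convexOn_of_integrand_ae (convex_Ioi 0) ?_
    fun r hr => integrable_remainderKernel hκ0 hexp hr
  filter_upwards [ae_pos_of_measure_Iic_eq_zero hκ0] with x hx
  exact (convexOn_remainderKernel hx).subset (subset_univ _) (convex_Ioi 0)

lemma IsBernstein.integral_remainderKernel_add_one_sub {Φ : ℝ → ℝ} (hΦ : IsBernstein Φ)
    (hne : ∃ s > (0 : ℝ), Φ s ≠ 0) (hκ0 : κ (Iic 0) = 0)
    (hκ : ∀ s > (0 : ℝ), ∫ x, exp (-s * x) ∂κ = deriv Φ s / Φ s) [SigmaFinite κ] {r : ℝ}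
    (hr : 0 < r) :
    ∫ x, remainderKernel (r + 1) x ∂κ - ∫ x, remainderKernel r x ∂κ = log (Φ r) - log (Φ 1) := by
  have hexp := fun s (hs : 0 < s) => hΦ.integrable_exp_of_laplace hne hκ hs
  rw [← integral_sub (integrable_remainderKernel hκ0 hexp (by linarith))
      (integrable_remainderKernel hκ0 hexp hr),
    integral_congr_ae ((ae_pos_of_measure_Iic_eq_zero hκ0).mono fun x hx =>
      remainderKernel_add_one_sub hx),
    integral_intervalIntegral_exp_comm hκ0 hexp hr,
    intervalIntegral.integral_congr fun s hs => hκ s (lt_of_lt_of_le (lt_min one_pos hr) hs.1),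
    hΦ.integral_deriv_div hne hr]

end LaplaceMeasure

/-- Integral representation of the Mellin transform of the remainder:
`R(r) = Φ(1)^{r-1} exp[∫ (e^{-(r-1)x} - 1 - (r-1)(e^{-x}-1)) / (x(e^x-1)) κ(dx)]`,
where `κ` is the measure on `(0,∞)` with Laplace transform `Φ'/Φ`. -/
theorem remainder_mellin_integral_representation
    (Φ : ℝ → ℝ) (hΦ : IsBernstein Φ) (hΦne : ∃ s > (0 : ℝ), Φ s ≠ 0)
    (κ : Measure ℝ) (hκ0 : κ (Iic 0) = 0)
    (hκ : ∀ s > (0 : ℝ), ∫ x, Real.exp (-s * x) ∂κ = deriv Φ s / Φ s)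
    (R : ℝ → ℝ) (hRpos : ∀ r > (0 : ℝ), 0 < R r) (hR1 : R 1 = 1)
    (hReq : ∀ r > (0 : ℝ), R (r + 1) = Φ r * R r)
    (hRconv : ConvexOn ℝ (Ioi 0) (fun r => Real.log (R r))) :
    ∀ r > (0 : ℝ),
      R r = Φ 1 ^ (r - 1) *
        Real.exp (∫ x,
          (Real.exp (-(r - 1) * x) - 1 - (r - 1) * (Real.exp (-x) - 1)) /
            (x * (Real.exp x - 1)) ∂κ) := by
  have hexp := fun s (hs : 0 < s) => hΦ.integrable_exp_of_laplace hΦne hκ hs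
  have : SigmaFinite κ := sigmaFinite_of_integrable_pos (hexp 1 one_pos) fun x => exp_pos _
  set c := log (Φ 1)
  set g : ℝ → ℝ := fun r => (r - 1) * c + ∫ x, remainderKernel r x ∂κ
  have hgrec : ∀ r > (0 : ℝ), g (r + 1) = g r + log (Φ r) := fun r hr => by
    have := hΦ.integral_remainderKernel_add_one_sub hΦne hκ0 hκ hr
    simp only [g]
    linarith
  have hRrec : ∀ r > (0 : ℝ), log (R (r + 1)) = log (R r) + log (Φ r) := fun r hr => by
    rw [hReq r hr, log_mul (hΦ.pos hΦne hr).ne' (hRpos r hr).ne', add_comm]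
  have hRg := eqOn_Ioi_of_convexOn_of_add_one hRconv
    (convexOn_affine_add_integral_remainderKernel hκ0 hexp c) hRrec hgrec (by simp [hR1])
    (hΦ.tendsto_log_succ_sub_log hΦne)
  intro r hr
  rw [← exp_log (hRpos r hr), show log (R r) = g r from hRg hr, exp_add,
    rpow_def_of_pos (hΦ.pos hΦne one_pos), mul_comm c]
  rfl
end

section
/- For the α-stable subordinator with Φ(s) = s^α, 0 < α < 1, the Mellin transforms of the perpetuity and the remainder are I(r) = Γ(r)^{1-α} and R(r) = Γ(r)^{α} for all r > 0. -/
/-!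
If `f` is log-convex, `f 1 = 1` and `f (r + 1) = r ^ c * f r` with `c > 0`, then `g = f ^ (1 / c)`
is log-convex, `g 1 = 1` and `g (r + 1) = r * g r`, so `g = Γ` by Bohr–Mollerup. Here
`r / Φ r = r ^ (1 - α)` and `Φ r = r ^ α`, and both exponents are positive.
-/

open Real Set

theorem Real.eq_Gamma_rpow_of_log_convex {c : ℝ} (hc : 0 < c) {f : ℝ → ℝ}
    (hf_conv : ConvexOn ℝ (Ioi 0) (log ∘ f))
    (hf_feq : ∀ {y : ℝ}, 0 < y → f (y + 1) = y ^ c * f y)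
    (hf_pos : ∀ {y : ℝ}, 0 < y → 0 < f y) (hf_one : f 1 = 1) :
    EqOn f (fun r => Gamma r ^ c) (Ioi 0) := by
  set g : ℝ → ℝ := fun r => f r ^ c⁻¹
  have hg_conv : ConvexOn ℝ (Ioi 0) (log ∘ g) := by
    refine (hf_conv.smul (inv_pos.mpr hc).le).congr fun y hy => ?_
    simp [g, log_rpow (hf_pos hy)]
  have hg_feq : ∀ {y : ℝ}, 0 < y → g (y + 1) = y * g y := fun {y} hy => by
    simp only [g, hf_feq hy, mul_rpow (rpow_nonneg hy.le c) (hf_pos hy).le,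
      rpow_rpow_inv hy.le hc.ne']
  have hg_Gamma : EqOn g Gamma (Ioi 0) :=
    eq_Gamma_of_log_convex hg_conv hg_feq (fun hy => rpow_pos_of_pos (hf_pos hy) _)
      (by simp [g, hf_one])
  intro r hr
  show f r = Gamma r ^ c
  rw [← hg_Gamma hr, rpow_inv_rpow (hf_pos hr).le hc.ne']

/-- For the α-stable subordinator, `Φ(s) = s^α` with `0 < α < 1`, the Mellin transforms
of the perpetuity and the remainder (the unique log-convex normalized solutions of the
functional equations `I(r+1) = (r/Φ(r)) I(r)` and `R(r+1) = Φ(r) R(r)`) are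
`I(r) = Γ(r)^{1-α}` and `R(r) = Γ(r)^α`. -/
theorem stable_perpetuity_remainder_mellin
    (α : ℝ) (hα0 : 0 < α) (hα1 : α < 1)
    (I R : ℝ → ℝ)
    (hIpos : ∀ r > (0 : ℝ), 0 < I r) (hI1 : I 1 = 1)
    (hIeq : ∀ r > (0 : ℝ), I (r + 1) = (r / r ^ α) * I r)
    (hIconv : ConvexOn ℝ (Ioi 0) (fun r => Real.log (I r)))
    (hRpos : ∀ r > (0 : ℝ), 0 < R r) (hR1 : R 1 = 1)
    (hReq : ∀ r > (0 : ℝ), R (r + 1) = r ^ α * R r)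
    (hRconv : ConvexOn ℝ (Ioi 0) (fun r => Real.log (R r))) :
    ∀ r > (0 : ℝ), I r = Real.Gamma r ^ (1 - α) ∧ R r = Real.Gamma r ^ α := by
  have hI : EqOn I (fun r => Gamma r ^ (1 - α)) (Ioi 0) :=
    eq_Gamma_rpow_of_log_convex (sub_pos.mpr hα1) hIconv
      (fun {r} hr => by rw [hIeq r hr, rpow_sub hr, rpow_one]) (hIpos _) hI1
  have hR : EqOn R (fun r => Gamma r ^ α) (Ioi 0) :=
    eq_Gamma_rpow_of_log_convex hα0 hRconv (hReq _) (hRpos _) hR1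
  exact fun r hr => ⟨hI hr, hR hr⟩
end
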